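/- For every p ∈ 𝕋³ the function q ↦ φ(q)²/w(p,q) (defined for a.e. q ∈ 𝕋³) is integrable on 𝕋³, i.e. ∫_{𝕋³} φ(q)²/w(p,q) dq < ∞. -/

import Mathlib

open MeasureTheory Real Filter

noncomputable section

instance : Fact (0 < 2 * Real.pi) := ⟨by positivity⟩

/-- the circle `ℝ/2πℤ`. -/
abbrev 𝕋 : Type := AddCircle (2 * Real.pi)

/-- the three-dimensional torus `𝕋³ = (ℝ/2πℤ)³`, carrying the product of the Haar
(Lebesgue) measures of total mass `2π`; its total mass is `(2π)³`. -/
abbrev T3 : Type := Fin 3 → 𝕋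

/-- the cosine function, lifted to the circle of circumference `2π`. -/
def ccos : 𝕋 → ℝ := Real.cos_periodic.lift

/-- the dispersion function `ε(p) = ∑_{j=1}^3 (1 - cos (m p⁽ʲ⁾))`. -/
def eps (m : ℕ) (p : T3) : ℝ := ∑ j : Fin 3, (1 - ccos (m • p j))

/-- the function `w(p,q) = ε(p) + ε(p+q) + ε(q)`. -/
def w (m : ℕ) (p q : T3) : ℝ := eps m p + eps m (p + q) + eps m q

/-- the representative of a point of `𝕋` in `[-π, π)`. -/
def rep (x : 𝕋) : ℝ := ((AddCircle.equivIco (2 * Real.pi) (-Real.pi)) x : ℝ)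

/-- Euclidean norm of the representative (in `[-π,π)³`) of a point of the torus. -/
def tnorm (p : T3) : ℝ := Real.sqrt (∑ j : Fin 3, rep (p j) ^ 2)

/-- Euclidean inner product of the representatives of two points of the torus. -/
def tinner (p q : T3) : ℝ := ∑ j : Fin 3, rep (p j) * rep (q j)

/-- a function on the torus is real-analytic if it lifts to an analytic
(automatically `2π`-periodic) function on `ℝ³`. -/
def TorusAnalytic (φ : T3 → ℝ) : Prop :=
  ∃ Φ : (Fin 3 → ℝ) → ℝ, (∀ x, AnalyticAt ℝ Φ x) ∧
    ∀ x : Fin 3 → ℝ, Φ x = φ (fun j => (x j : 𝕋))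

/-- evenness of a function on the torus. -/
def TorusEven (φ : T3 → ℝ) : Prop := ∀ p : T3, φ (-p) = φ p

/-- the Fredholm determinant `Δ_μ(p; z) = 1 - μ ∫_{𝕋³} φ(q)²/(w(p,q) - z) dq`. -/
def Delta (m : ℕ) (φ : T3 → ℝ) (μ : ℝ) (p : T3) (z : ℝ) : ℝ :=
  1 - μ * ∫ q : T3, φ q ^ 2 / (w m p q - z)

/-!
Since `ε ≥ 0`, `w(p, q) ≥ ε(q) = ∑ⱼ (1 - cos (m qⱼ))`, and by AM-GM
`1 / ε(q) ≤ (1 / 3) ∏ⱼ (1 - cos (m qⱼ)) ^ (-1/3)` wherever all factors are positive, that is,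
almost everywhere. The right-hand side is a product of functions of one variable, each integrable
on the circle: `y ↦ m • y` preserves Haar measure, and `1 - cos t ≥ 2 t² / π²` on `[-π, π]`, so
`(1 - cos t) ^ (-1/3) = O(|t| ^ (-2/3))`. Finally `φ`, being continuous on the compact torus,
is bounded.
-/

open Set

theorem ccos_coe (t : ℝ) : ccos t = cos t := cos_periodic.lift_coe t

theorem continuous_ccos : Continuous ccos := continuous_cos.quotient_liftOn' _

theorem ccos_le_one (y : 𝕋) : ccos y ≤ 1 := by
  induction y using QuotientAddGroup.induction_on with
  | H t => exact (ccos_coe t).trans_le (cos_le_one t)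

theorem ccos_eq_one_iff {y : 𝕋} : ccos y = 1 ↔ y = 0 := by
  induction y using QuotientAddGroup.induction_on with
  | H t =>
    rw [ccos_coe, cos_eq_one_iff, AddCircle.coe_eq_zero_iff]
    simp only [zsmul_eq_mul]

theorem eps_nonneg (m : ℕ) (q : T3) : 0 ≤ eps m q :=
  Finset.sum_nonneg fun _ _ => sub_nonneg.2 (ccos_le_one _)

theorem eps_le_w (m : ℕ) (p q : T3) : eps m q ≤ w m p q := by
  unfold w
  linarith [eps_nonneg m p, eps_nonneg m (p + q)]

theorem continuous_eps (m : ℕ) : Continuous (eps m) :=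
  continuous_finsetSum _ fun j _ =>
    continuous_const.sub (continuous_ccos.comp ((continuous_apply j).nsmul m))

theorem continuous_w (m : ℕ) (p : T3) : Continuous (w m p) :=
  (continuous_const.add ((continuous_eps m).comp (continuous_const.add continuous_id))).add
    (continuous_eps m)

theorem TorusAnalytic.continuous {φ : T3 → ℝ} (hφ : TorusAnalytic φ) : Continuous φ := by
  obtain ⟨Φ, hΦa, hΦφ⟩ := hφ
  have hΦ : Continuous Φ := continuous_iff_continuousAt.2 fun x => (hΦa x).continuousAt
  refine (IsOpenQuotientMap.piMap fun _ =>
    QuotientAddGroup.isOpenQuotientMap_mk).continuous_comp_iff.1 ?_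
  convert hΦ
  exact funext fun x => (hΦφ x).symm

theorem integrableOn_abs_rpow {s : ℝ} (hs : -1 < s) (a b : ℝ) :
    IntegrableOn (fun t : ℝ => |t| ^ s) (Icc a b) := by
  refine (locallyIntegrable_of_norm_le_rpow (μ := volume) (C := 1) (α := -s) (by simp)
    (by simpa using neg_lt.1 hs) (ae_of_all _ fun t => ?_) ?_).integrableOn_isCompact
    isCompact_Icc
  · rw [norm_of_nonneg (by positivity), norm_eq_abs, neg_neg, one_mul]
  · exact (continuous_abs.measurable.pow_const s).aestronglyMeasurable

theorem one_sub_cos_rpow_le {r : ℝ} (hr : r ≤ 0) {t : ℝ} (ht₀ : t ≠ 0) (ht : |t| ≤ π) :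
    (1 - cos t) ^ r ≤ (2 / π ^ 2) ^ r * |t| ^ (2 * r) := by
  have hpos : 0 < 2 / π ^ 2 * t ^ 2 := by positivity
  calc (1 - cos t) ^ r ≤ (2 / π ^ 2 * t ^ 2) ^ r :=
        rpow_le_rpow_of_nonpos hpos (by linarith [cos_le_one_sub_mul_cos_sq ht]) hr
    _ = (2 / π ^ 2) ^ r * |t| ^ (2 * r) := by
        rw [mul_rpow (by positivity) (sq_nonneg t), ← sq_abs t, ← rpow_natCast |t| 2,
          ← rpow_mul (abs_nonneg t)]
        norm_num

theorem integrableOn_one_sub_cos_rpow {r : ℝ} (hr : -(1 / 2) < r) (hr₀ : r ≤ 0) :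
    IntegrableOn (fun t => (1 - cos t) ^ r) (Ioc (-π) π) := by
  refine ((integrableOn_abs_rpow (s := 2 * r) (by linarith) (-π) π).mono_set
    Ioc_subset_Icc_self |>.const_mul ((2 / π ^ 2) ^ r)).mono'
    ((continuous_const.sub continuous_cos).measurable.pow_const r).aestronglyMeasurable ?_
  rw [ae_restrict_iff' measurableSet_Ioc]
  filter_upwards [Measure.ae_ne volume 0] with t ht₀ ht
  rw [norm_of_nonneg (rpow_nonneg (sub_nonneg.2 (cos_le_one t)) r)]
  exact one_sub_cos_rpow_le hr₀ ht₀ (abs_le.2 ⟨ht.1.le, ht.2⟩)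

theorem integrable_one_sub_ccos_rpow {r : ℝ} (hr : -(1 / 2) < r) (hr₀ : r ≤ 0) :
    Integrable (fun y : 𝕋 => (1 - ccos y) ^ r) := by
  have hmp := AddCircle.measurePreserving_mk (2 * π) (-π)
  rw [show -π + 2 * π = π by ring] at hmp
  refine (hmp.integrable_comp ?_).1 ?_
  · exact ((continuous_const.sub continuous_ccos).measurable.pow_const r).aestronglyMeasurable
  · simp only [Function.comp_def, ccos_coe]
    exact integrableOn_one_sub_cos_rpow hr hr₀

theorem AddCircle.measurePreserving_nsmul {T : ℝ} [Fact (0 < T)] {n : ℕ} (hn : n ≠ 0) :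
    MeasurePreserving (fun y : AddCircle T => n • y) volume volume := by
  simpa only [natCast_zsmul] using
    Measure.measurePreserving_zsmul (volume : Measure (AddCircle T)) (Int.natCast_ne_zero.2 hn)

theorem AddCircle.ae_nsmul_ne_zero {T : ℝ} [Fact (0 < T)] {n : ℕ} (hn : n ≠ 0) :
    ∀ᵐ y : AddCircle T, n • y ≠ 0 := by
  have h0 : volume ({0} : Set (AddCircle T)) = 0 := by
    rw [← Metric.closedBall_zero, AddCircle.volume_closedBall]
    simp
  rw [ae_iff]
  exact measure_mono_null (fun y hy => by simpa using hy)
    ((measurePreserving_nsmul hn).preimage_null h0)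

theorem integrable_one_sub_ccos_nsmul_rpow {m : ℕ} (hm : m ≠ 0) {r : ℝ} (hr : -(1 / 2) < r)
    (hr₀ : r ≤ 0) : Integrable (fun y : 𝕋 => (1 - ccos (m • y)) ^ r) :=
  ((AddCircle.measurePreserving_nsmul hm).integrable_comp
    ((continuous_const.sub continuous_ccos).measurable.pow_const r).aestronglyMeasurable).2
    (integrable_one_sub_ccos_rpow hr hr₀)

theorem ae_ccos_nsmul_lt_one {m : ℕ} (hm : m ≠ 0) : ∀ᵐ y : 𝕋, ccos (m • y) < 1 := by
  filter_upwards [AddCircle.ae_nsmul_ne_zero hm] with y hy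
  exact (ccos_le_one _).lt_of_ne (mt ccos_eq_one_iff.1 hy)

theorem ae_forall_ccos_nsmul_lt_one {ι : Type*} [Fintype ι] {m : ℕ} (hm : m ≠ 0) :
    ∀ᵐ q : ι → 𝕋, ∀ j, ccos (m • q j) < 1 :=
  ae_all_iff.2 fun j => (Measure.tendsto_eval_ae_ae (μ := fun _ : ι => (volume : Measure 𝕋))
    (i := j)).eventually (ae_ccos_nsmul_lt_one hm)

theorem inv_sum_le_inv_card_mul_prod_rpow {ι : Type*} [Fintype ι] [Nonempty ι] {a : ι → ℝ}
    (ha : ∀ i, 0 < a i) :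
    (∑ i, a i)⁻¹ ≤ (Fintype.card ι : ℝ)⁻¹ * ∏ i, a i ^ (-(Fintype.card ι : ℝ)⁻¹) := by
  set n : ℝ := (Fintype.card ι : ℝ)
  have hn : 0 < n := Nat.cast_pos.2 Fintype.card_pos
  have amgm : ∏ i, a i ^ n⁻¹ ≤ n⁻¹ * ∑ i, a i := by
    rw [Finset.mul_sum]
    exact geom_mean_le_arith_mean_weighted _ _ a (fun _ _ => by positivity)
      (by simp [n, hn.ne']) fun i _ => (ha i).le
  calc (∑ i, a i)⁻¹ ≤ (n * ∏ i, a i ^ n⁻¹)⁻¹ :=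
        inv_anti₀ (mul_pos hn (Finset.prod_pos fun i _ => rpow_pos_of_pos (ha i) _))
          ((le_inv_mul_iff₀ hn).1 amgm)
    _ = n⁻¹ * ∏ i, a i ^ (-n⁻¹) := by
        simp only [mul_inv, ← Finset.prod_inv_distrib, rpow_neg (ha _).le]

theorem integrable_inv_eps {m : ℕ} (hm : m ≠ 0) : Integrable (fun q : T3 => (eps m q)⁻¹) := by
  have hdom : Integrable (fun q : T3 => (3 : ℝ)⁻¹ * ∏ j, (1 - ccos (m • q j)) ^ (-(3 : ℝ)⁻¹)) :=
    (Integrable.fintype_prod fun _ =>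
      integrable_one_sub_ccos_nsmul_rpow hm (by norm_num) (by norm_num)).const_mul _
  refine hdom.mono' (continuous_eps m).measurable.inv.aestronglyMeasurable ?_
  filter_upwards [ae_forall_ccos_nsmul_lt_one hm] with q hq
  rw [norm_of_nonneg (inv_nonneg.2 (eps_nonneg m q))]
  have amgm := inv_sum_le_inv_card_mul_prod_rpow fun j => sub_pos.2 (hq j)
  rwa [Fintype.card_fin, Nat.cast_ofNat] at amgm

theorem integrable_inv_w {m : ℕ} (hm : m ≠ 0) (p : T3) :
    Integrable (fun q : T3 => (w m p q)⁻¹) := by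
  refine (integrable_inv_eps hm).mono' (continuous_w m p).measurable.inv.aestronglyMeasurable ?_
  filter_upwards [ae_forall_ccos_nsmul_lt_one hm] with q hq
  have heps : 0 < eps m q := Finset.sum_pos (fun j _ => sub_pos.2 (hq j)) Finset.univ_nonempty
  rw [norm_of_nonneg (inv_nonneg.2 (heps.trans_le (eps_le_w m p q)).le)]
  exact inv_anti₀ heps (eps_le_w m p q)

theorem integrable_phi_sq_div_w (m : ℕ) (hm : 3 ≤ m)
    (φ : T3 → ℝ) (hφa : TorusAnalytic φ) (p : T3) :
    Integrable (fun q : T3 => φ q ^ 2 / w m p q) volume := by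
  have hφ : Continuous fun q => φ q ^ 2 := hφa.continuous.pow 2
  obtain ⟨C, hC⟩ := isCompact_univ.exists_bound_of_continuousOn hφ.continuousOn
  simpa only [div_eq_mul_inv] using (integrable_inv_w (by omega) p).bdd_mul
    hφ.aestronglyMeasurable (ae_of_all _ fun q => hC q (mem_univ q))

end
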